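/- Let X : [0,L] → ℝ^d be a piecewise continuously differentiable path (with arbitrary starting point) and let p : ℝ^d → ℝ^m be any polynomial map. Define the polynomial map p̃ : ℝ^d → ℝ^m by p̃(y) = p(y + X(0)) − p(X(0)), so that p̃(0) = 0. Then for every w ∈ T(ℝ^m), ⟨σ(p(X)), w⟩ = ⟨σ(X), M_{p̃}(w)⟩, where p(X) denotes the path t ↦ p(X(t)). -/

import Mathlib

/-!
Both sides are iterated integrals of the path, so they vanish at time `0` except on the empty
word, and it suffices to compare their derivatives in the upper limit of integration. For
`x ∈ T(ℝ^d)` the coordinate `s ↦ ⟨σ(X|[0,s]), x⟩` has derivative `Σ_i ⟨σ(X|[0,s]), T_i^- x⟩ Ẋ^i_s`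
away from the break points of `X`. Since `T_i^-` is a derivation of `⧢`, this gives the shuffle
identity `⟨σ, u ⧢ v⟩ = ⟨σ, u⟩⟨σ, v⟩`, and with `⟨σ(X|[0,s]), i⟩ = X^i_s - X^i_0` it gives
`⟨σ(X|[0,s]), φ_d(q)⟩ = q(X_s - X_0)`. By the chain rule,
`d p_i(X_s) = Σ_j ∂_j p_i(X_s) dX^j_s = Σ_j ⟨σ(X|[0,s]), k_{p̃}^{ij}⟩ dX^j_s`, which is
exactly the recursion defining `M_{p̃}`; induction on the word concludes.
-/

noncomputable section

open MeasureTheory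

/-- Words in the alphabet `{1,…,d}`. -/
abbrev Word (d : ℕ) := List (Fin d)

/-- `T(ℝ^d)`: the real vector space with basis the words in `{1,…,d}`. -/
abbrev Tens (d : ℕ) := Word d →₀ ℝ

namespace SigPaper

variable {d m s : ℕ}

/-- The basis word `w` as an element of `T(ℝ^d)`. -/
def wordT (w : Word d) : Tens d := Finsupp.single w 1

/-- The shuffle product of two words. -/
def shuffleWord : Word d → Word d → Tens d
  | [], v => Finsupp.single v 1
  | u, [] => Finsupp.single u 1
  | a :: u, b :: v =>
      Finsupp.mapDomain (fun w => a :: w) (shuffleWord u (b :: v)) +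
      Finsupp.mapDomain (fun w => b :: w) (shuffleWord (a :: u) v)
  termination_by u v => u.length + v.length
  decreasing_by all_goals simp +arith

/-- The shuffle product `⧢` on `T(ℝ^d)`, the bilinear extension of the shuffle of words. -/
def shuffle (x y : Tens d) : Tens d :=
  x.sum fun u a => y.sum fun v b => (a * b) • shuffleWord u v

/-- The operator appending the letter `i` at the end of every word (`T_i^+`). -/
def appendLetter (i : Fin d) (x : Tens d) : Tens d :=
  Finsupp.mapDomain (fun w => w ++ [i]) x

/-- The right half-shuffle of two words: `w ≻ (v∘i) = (w ⧢ v)∘i` (zero if the right word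
is empty). -/
def halfShuffleWord (u v : Word d) : Tens d :=
  match v.getLast? with
  | none => 0
  | some i => appendLetter i (shuffleWord u v.dropLast)

/-- The right half-shuffle `≻`, extended bilinearly. -/
def halfShuffle (x y : Tens d) : Tens d :=
  x.sum fun u a => y.sum fun v b => (a * b) • halfShuffleWord u v

/-- The letter-appending operator `T_i^+`. -/
def Tplus (i : Fin d) : Tens d → Tens d := appendLetter i

/-- `T_i^-` on a word: removes the last letter if it equals `i`, otherwise `0`. -/
def TminusWord (i : Fin d) (w : Word d) : Tens d :=
  match w.getLast? with
  | none => 0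
  | some j => if j = i then Finsupp.single w.dropLast 1 else 0

/-- The letter-removing operator `T_i^-`. -/
def Tminus (i : Fin d) (x : Tens d) : Tens d := x.sum fun w a => a • TminusWord i w

/-- The single-letter word `i` in `T(ℝ^d)`. -/
def letterT (i : Fin d) : Tens d := Finsupp.single [i] 1

/-- Shuffle powers `x^{⧢ n}`. -/
def shufflePow (x : Tens d) : ℕ → Tens d
  | 0 => Finsupp.single [] 1
  | n + 1 => shuffle (shufflePow x n) x

/-- Shuffle product of a list of elements. -/
def shuffleList : List (Tens d) → Tens d
  | [] => Finsupp.single [] 1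
  | x :: xs => shuffle x (shuffleList xs)

/-- Image of the monomial `x^t` under `φ_d`: the shuffle product of its letters. -/
def phiMon (t : Fin d →₀ ℕ) : Tens d :=
  shuffleList ((List.finRange d).map fun i => shufflePow (letterT i) (t i))

/-- The embedding `φ_d : ℝ[x₁,…,x_d] → (T(ℝ^d), ⧢)` sending the monomial
`x_{i₁}⋯x_{i_l}` to `i₁ ⧢ ⋯ ⧢ i_l`. -/
def phi (f : MvPolynomial (Fin d) ℝ) : Tens d :=
  f.support.sum fun t => f.coeff t • phiMon t

/-- A polynomial map `p : ℝ^d → ℝ^m`, given by `m` polynomials in `d` variables. -/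
abbrev PolyMap (d m : ℕ) := Fin m → MvPolynomial (Fin d) ℝ

/-- `k_p^{ij} = φ_d(∂p_i/∂x_j) ∈ T(ℝ^d)`. -/
def kP (p : PolyMap d m) (i : Fin m) (j : Fin d) : Tens d :=
  phi (MvPolynomial.pderiv j (p i))

/-- Auxiliary: `M_p` on reversed words, so that `M_p(e) = e` and
`M_p(w∘i) = Σ_j (M_p(w) ⧢ k_p^{ij})∘j`. -/
def MpRev (p : PolyMap d m) : List (Fin m) → Tens d
  | [] => Finsupp.single [] 1
  | i :: w => ∑ j : Fin d, appendLetter j (shuffle (MpRev p w) (kP p i j))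

/-- `M_p` on a word. -/
def MpWord (p : PolyMap d m) (w : Word m) : Tens d := MpRev p w.reverse

/-- The linear map `M_p : T(ℝ^m) → T(ℝ^d)`. -/
def Mp (p : PolyMap d m) (x : Tens m) : Tens d := x.sum fun w a => a • MpWord p w

/-- `X : [0,L] → ℝ^d` is piecewise continuously differentiable: there is a partition
`0 = t₀ ≤ t₁ ≤ ⋯ ≤ t_n = L` such that `X` is `C¹` on each subinterval. -/
def PiecewiseC1 (X : ℝ → Fin d → ℝ) (L : ℝ) : Prop :=
  ∃ (n : ℕ) (t : Fin (n + 1) → ℝ), Monotone t ∧ t 0 = 0 ∧ t (Fin.last n) = L ∧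
    ∀ k : Fin n, ContDiffOn ℝ 1 X (Set.Icc (t k.castSucc) (t k.succ))

/-- Iterated-integral signature coefficients, on reversed words:
`⟨σ(X|_{[0,t]}), w∘i⟩ = ∫_0^t ⟨σ(X|_{[0,r]}), w⟩ Ẋ^i_r dr`. -/
def sigRev (X : ℝ → Fin d → ℝ) : List (Fin d) → ℝ → ℝ
  | [], _ => 1
  | i :: w, t => ∫ r in (0:ℝ)..t, sigRev X w r * deriv (fun u => X u i) r

/-- `⟨σ(X|_{[0,L]}), w⟩`, the signature coefficient of the word `w`. -/
def sigWord (X : ℝ → Fin d → ℝ) (L : ℝ) (w : Word d) : ℝ := sigRev X w.reverse L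

/-- The pairing `⟨σ(X|_{[0,L]}), x⟩` for `x ∈ T(ℝ^d)`. -/
def sigT (X : ℝ → Fin d → ℝ) (L : ℝ) (x : Tens d) : ℝ :=
  x.sum fun w a => a * sigWord X L w

/-- The transformed path `p(X) : t ↦ p(X(t))`. -/
def pPath (p : PolyMap d m) (X : ℝ → Fin d → ℝ) : ℝ → Fin m → ℝ :=
  fun t i => MvPolynomial.eval (X t) (p i)

/-- The translated polynomial map `p̃(y) = p(y + x₀) − p(x₀)`, satisfying `p̃(0) = 0`. -/
def ptilde (p : PolyMap d m) (x0 : Fin d → ℝ) : PolyMap d m := fun i =>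
  MvPolynomial.aeval (fun j => MvPolynomial.X j + MvPolynomial.C (x0 j)) (p i) -
    MvPolynomial.C (MvPolynomial.eval x0 (p i))

/-- The pairing `⟨exp_∘(L·𝟙), x⟩` for `x ∈ T(ℝ¹)`: the coefficient of the word of
length `n` in `exp_∘(L·𝟙)` is `Lⁿ/n!`. -/
def expPair (L : ℝ) (x : Tens 1) : ℝ :=
  x.sum fun w a => a * (L ^ w.length / (w.length.factorial : ℝ))

/-- The pairing `⟨σ(X) ∘ σ(Y), x⟩` of the concatenation product of two signatures with
`x ∈ T(ℝ^d)`: on a word `w` it is `Σ_{u∘v = w} ⟨σ(X), u⟩·⟨σ(Y), v⟩`. -/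
def concatPair (X Y : ℝ → Fin d → ℝ) (L : ℝ) (x : Tens d) : ℝ :=
  x.sum fun w a =>
    a * ∑ k ∈ Finset.range (w.length + 1), sigWord X L (w.take k) * sigWord Y L (w.drop k)

section Algebra

open Finsupp

theorem sigT_eq_linearCombination (X : ℝ → Fin d → ℝ) (L : ℝ) (x : Tens d) :
    sigT X L x = linearCombination ℝ (sigWord X L) x := by
  simp only [sigT, linearCombination_apply, smul_eq_mul]

@[simp] theorem sigT_single (X : ℝ → Fin d → ℝ) (L : ℝ) (w : Word d) (c : ℝ) :
    sigT X L (single w c) = c * sigWord X L w := by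
  simp [sigT_eq_linearCombination]

@[simp] theorem sigT_zero (X : ℝ → Fin d → ℝ) (L : ℝ) : sigT X L 0 = 0 := by
  simp [sigT_eq_linearCombination]

@[simp] theorem sigT_add (X : ℝ → Fin d → ℝ) (L : ℝ) (x y : Tens d) :
    sigT X L (x + y) = sigT X L x + sigT X L y := by
  simp [sigT_eq_linearCombination]

@[simp] theorem sigT_smul (X : ℝ → Fin d → ℝ) (L c : ℝ) (x : Tens d) :
    sigT X L (c • x) = c * sigT X L x := by
  simp [sigT_eq_linearCombination]

@[simp] theorem sigT_sum {ι : Type*} (X : ℝ → Fin d → ℝ) (L : ℝ) (s : Finset ι)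
    (f : ι → Tens d) : sigT X L (∑ a ∈ s, f a) = ∑ a ∈ s, sigT X L (f a) := by
  simp [sigT_eq_linearCombination]

theorem Tminus_eq_linearCombination (i : Fin d) (x : Tens d) :
    Tminus i x = linearCombination ℝ (TminusWord i) x := by
  simp only [Tminus, linearCombination_apply]

@[simp] theorem Tminus_single (i : Fin d) (w : Word d) (c : ℝ) :
    Tminus i (single w c) = c • TminusWord i w := by
  simp [Tminus_eq_linearCombination]

@[simp] theorem Tminus_zero (i : Fin d) : Tminus i 0 = 0 := by
  simp [Tminus_eq_linearCombination]

@[simp] theorem Tminus_add (i : Fin d) (x y : Tens d) :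
    Tminus i (x + y) = Tminus i x + Tminus i y := by
  simp [Tminus_eq_linearCombination]

@[simp] theorem Tminus_sum {ι : Type*} (i : Fin d) (s : Finset ι) (f : ι → Tens d) :
    Tminus i (∑ a ∈ s, f a) = ∑ a ∈ s, Tminus i (f a) := by
  simp [Tminus_eq_linearCombination]

theorem shuffle_eq_sum (x y : Tens d) :
    shuffle x y = ∑ u ∈ x.support, ∑ v ∈ y.support, (x u * y v) • shuffleWord u v := rfl

@[simp] theorem shuffle_single_single (u v : Word d) (a b : ℝ) :
    shuffle (single u a) (single v b) = (a * b) • shuffleWord u v := by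
  simp [shuffle, sum_single_index]

@[simp] theorem shuffle_zero_left (y : Tens d) : shuffle 0 y = 0 := rfl

@[simp] theorem shuffle_zero_right (x : Tens d) : shuffle x 0 = 0 := by
  simp [shuffle]

theorem shuffleWord_nil_left (v : Word d) : shuffleWord [] v = single v 1 := by
  rw [shuffleWord]

theorem shuffleWord_nil_right (u : Word d) : shuffleWord u [] = single u 1 := by
  cases u <;> rw [shuffleWord]; simp

theorem shuffleWord_cons_cons (a b : Fin d) (u v : Word d) :
    shuffleWord (a :: u) (b :: v) =
      mapDomain (a :: ·) (shuffleWord u (b :: v)) +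
        mapDomain (b :: ·) (shuffleWord (a :: u) v) := by
  rw [shuffleWord]

theorem appendLetter_single (b : Fin d) (w : Word d) (c : ℝ) :
    appendLetter b (single w c) = single (w ++ [b]) c :=
  mapDomain_single

theorem appendLetter_add (b : Fin d) (x y : Tens d) :
    appendLetter b (x + y) = appendLetter b x + appendLetter b y :=
  mapDomain_add

theorem mapDomain_cons_appendLetter (a b : Fin d) (x : Tens d) :
    mapDomain (a :: ·) (appendLetter b x) = appendLetter b (mapDomain (a :: ·) x) := by
  simp only [appendLetter, ← mapDomain_comp]
  rfl

/-- The paper's recursion on last letters; `shuffleWord` itself recurses on first letters. -/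
theorem shuffleWord_append_singleton (u v : Word d) (a b : Fin d) :
    shuffleWord (u ++ [a]) (v ++ [b]) =
      appendLetter a (shuffleWord u (v ++ [b])) + appendLetter b (shuffleWord (u ++ [a]) v) := by
  induction u generalizing v with
  | nil =>
    induction v with
    | nil =>
      simp only [List.nil_append, shuffleWord_cons_cons, shuffleWord_nil_left,
        shuffleWord_nil_right, mapDomain_single, appendLetter_single, List.cons_append]
      abel
    | cons c v ihv =>
      simp only [List.nil_append, List.cons_append] at ihv ⊢
      rw [shuffleWord_cons_cons a c [] (v ++ [b]), ihv, shuffleWord_cons_cons a c [] v]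
      simp only [shuffleWord_nil_left, mapDomain_single, mapDomain_add, appendLetter_add,
        appendLetter_single, mapDomain_cons_appendLetter, List.cons_append]
      abel
  | cons c u ihu =>
    induction v with
    | nil =>
      have h := ihu []
      simp only [List.nil_append, shuffleWord_nil_right] at h
      simp only [List.nil_append, List.cons_append, shuffleWord_cons_cons, h,
        shuffleWord_nil_right, mapDomain_single, mapDomain_add,
        appendLetter_add, appendLetter_single, mapDomain_cons_appendLetter]
      abel
    | cons e v ihv =>
      have h := ihu (e :: v)
      simp only [List.cons_append] at h ihv ⊢
      rw [shuffleWord_cons_cons c e (u ++ [a]) (v ++ [b]), h, ihv,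
        shuffleWord_cons_cons c e u (v ++ [b]), shuffleWord_cons_cons c e (u ++ [a]) v]
      simp only [mapDomain_add, appendLetter_add, mapDomain_cons_appendLetter]
      abel

theorem shuffle_wordT_wordT (u v : Word d) : shuffle (wordT u) (wordT v) = shuffleWord u v := by
  simp [wordT]

theorem shuffle_wordT_nil_left (y : Tens d) : shuffle (wordT []) y = y := by
  simp [shuffle, wordT, sum_single_index, shuffleWord_nil_left]

theorem shuffle_wordT_nil_right (x : Tens d) : shuffle x (wordT []) = x := by
  simp [shuffle, wordT, sum_single_index, shuffleWord_nil_right]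

@[simp] theorem TminusWord_nil (i : Fin d) : TminusWord i [] = 0 := rfl

theorem TminusWord_append_singleton (i : Fin d) (u : Word d) (a : Fin d) :
    TminusWord i (u ++ [a]) = if a = i then wordT u else 0 := by
  simp [TminusWord, wordT]

theorem Tminus_appendLetter (i j : Fin d) (x : Tens d) :
    Tminus i (appendLetter j x) = if j = i then x else 0 := by
  induction x using Finsupp.induction_linear with
  | zero => simp [appendLetter]
  | add x y hx hy => simp only [appendLetter_add, Tminus_add, hx, hy]; split_ifs <;> simp
  | single w c =>
    rw [appendLetter_single, Tminus_single, TminusWord_append_singleton]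
    split_ifs <;> simp [wordT]

theorem Tminus_shuffleWord (i : Fin d) (u v : Word d) :
    Tminus i (shuffleWord u v) =
      shuffle (TminusWord i u) (wordT v) + shuffle (wordT u) (TminusWord i v) := by
  rcases List.eq_nil_or_concat' u with rfl | ⟨u, a, rfl⟩
  · simp [shuffleWord_nil_left, shuffle_wordT_nil_left]
  rcases List.eq_nil_or_concat' v with rfl | ⟨v, b, rfl⟩
  · simp [shuffleWord_nil_right, shuffle_wordT_nil_right]
  simp only [shuffleWord_append_singleton, Tminus_add, Tminus_appendLetter,
    TminusWord_append_singleton]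
  congr 1 <;> split_ifs <;> simp [shuffle_wordT_wordT]

theorem appendLetter_apply_nil (j : Fin d) (x : Tens d) : appendLetter j x [] = 0 :=
  mapDomain_of_notMem_range _ _ (by simp)

theorem shuffleWord_apply_nil (u v : Word d) :
    shuffleWord u v [] = if u = [] ∧ v = [] then 1 else 0 := by
  cases u with
  | nil => cases v <;> simp [shuffleWord_nil_left]
  | cons a u =>
    cases v with
    | nil => simp [shuffleWord_nil_right]
    | cons b v => simp [shuffleWord_cons_cons, mapDomain_of_notMem_range]

theorem length_lt_of_mem_support_TminusWord {i : Fin d} {u w : Word d}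
    (hw : w ∈ (TminusWord i u).support) : w.length < u.length := by
  rcases List.eq_nil_or_concat' u with rfl | ⟨u, a, rfl⟩
  · simp at hw
  · rw [TminusWord_append_singleton] at hw
    split_ifs at hw
    · simp [wordT] at hw
      simp [hw]
    · simp at hw

end Algebra

section Polynomial

open MvPolynomial

theorem contDiff_eval {σ : Type*} [Fintype σ] {k : WithTop ℕ∞} (f : MvPolynomial σ ℝ) :
    ContDiff ℝ k fun y => eval y f :=
  contDiffOn_univ.1 ((AnalyticOnNhd.eval_mvPolynomial f).contDiffOn uniqueDiffOn_univ)

theorem hasDerivAt_eval_comp {𝕜 σ : Type*} [NontriviallyNormedField 𝕜] [Fintype σ]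
    {γ : 𝕜 → σ → 𝕜} {γ' : σ → 𝕜} {r : 𝕜} (hγ : ∀ j, HasDerivAt (γ · j) (γ' j) r)
    (f : MvPolynomial σ 𝕜) :
    HasDerivAt (fun u => eval (γ u) f) (∑ j, eval (γ r) (pderiv j f) * γ' j) r := by
  classical
  induction f using MvPolynomial.induction_on with
  | C a => simpa using hasDerivAt_const r a
  | add p q hp hq =>
    simp only [map_add, add_mul, Finset.sum_add_distrib]
    exact hp.add hq
  | mul_X p n hp =>
    simp only [map_mul, eval_X]
    refine (hp.mul (hγ n)).congr_deriv ?_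
    simp only [Derivation.leibniz, pderiv_X, smul_eq_mul, map_add, map_mul, eval_X,
      Pi.single_apply, add_mul, Finset.sum_add_distrib, Finset.sum_mul]
    simp [mul_comm, mul_left_comm, add_comm]

theorem pderiv_aeval_add_C {R σ : Type*} [CommSemiring R] (x₀ : σ → R) (j : σ)
    (f : MvPolynomial σ R) :
    pderiv j (aeval (fun k => X k + C (x₀ k)) f) =
      aeval (fun k => X k + C (x₀ k)) (pderiv j f) := by
  classical
  induction f using MvPolynomial.induction_on with
  | C a => simp
  | add p q hp hq => simp only [map_add, hp, hq]
  | mul_X p n hp =>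
    simp only [map_mul, aeval_X, Derivation.leibniz, hp, map_add, pderiv_X, pderiv_C, add_zero,
      smul_eq_mul]
    congr 1
    rcases eq_or_ne j n with rfl | h
    · simp
    · simp [Ne.symm h]

theorem eval_aeval_add_C {R σ : Type*} [CommSemiring R] (x₀ y : σ → R) (f : MvPolynomial σ R) :
    eval y (aeval (fun k => X k + C (x₀ k)) f) = eval (y + x₀) f := by
  rw [aeval_eq_bind₁]
  show eval₂Hom (RingHom.id R) y _ = _
  rw [eval₂Hom_bind₁]
  simp only [map_add, eval₂Hom_X', eval₂Hom_C, RingHom.id_apply]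
  rfl

theorem pderiv_ptilde (p : PolyMap d m) (x₀ : Fin d → ℝ) (i : Fin m) (j : Fin d) :
    pderiv j (ptilde p x₀ i) = aeval (fun k => X k + C (x₀ k)) (pderiv j (p i)) := by
  rw [ptilde, map_sub, pderiv_C, sub_zero, pderiv_aeval_add_C]

end Polynomial

section Analysis

open Set MeasureTheory intervalIntegral

theorem eqOn_Icc_of_hasDerivAt_off_countable {E : Type*} [NormedAddCommGroup E]
    [NormedSpace ℝ E] [CompleteSpace E] {f g f' : ℝ → E} {a b : ℝ} {S : Set ℝ}
    (hS : S.Countable) (hf : ContinuousOn f (Icc a b)) (hg : ContinuousOn g (Icc a b))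
    (ha : f a = g a) (hf' : ∀ r ∈ Ioo a b \ S, HasDerivAt f (f' r) r)
    (hg' : ∀ r ∈ Ioo a b \ S, HasDerivAt g (f' r) r) : EqOn f g (Icc a b) := by
  intro u hu
  have hsub : Ioo a u \ S ⊆ Ioo a b \ S := sdiff_subset_sdiff_left (Ioo_subset_Ioo_right hu.2)
  have h := integral_eq_of_hasDerivAt_off_countable_of_le (f - g) 0 hu.1 hS
    ((hf.sub hg).mono (Icc_subset_Icc_right hu.2))
    (fun r hr => by simpa using (hf' r (hsub hr)).sub (hg' r (hsub hr))) intervalIntegrable_const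
  simp only [Pi.zero_apply, intervalIntegral.integral_zero, Pi.sub_apply, ha, sub_self,
    sub_zero] at h
  exact sub_eq_zero.1 h.symm

structure IsC1Partition (X : ℝ → Fin d → ℝ) (L : ℝ) {n : ℕ} (t : Fin (n + 1) → ℝ) : Prop where
  monotone : Monotone t
  zero : t 0 = 0
  last : t (Fin.last n) = L
  contDiffOn : ∀ k : Fin n, ContDiffOn ℝ 1 X (Icc (t k.castSucc) (t k.succ))

namespace IsC1Partition

variable {X : ℝ → Fin d → ℝ} {L : ℝ} {n : ℕ} {t : Fin (n + 1) → ℝ}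

theorem mem_Icc (hP : IsC1Partition X L t) (k : Fin (n + 1)) : t k ∈ Icc 0 L :=
  ⟨hP.zero ▸ hP.monotone (Fin.zero_le k), hP.last ▸ hP.monotone (Fin.le_last k)⟩

theorem nonneg (hP : IsC1Partition X L t) : 0 ≤ L :=
  hP.last ▸ (hP.mem_Icc _).1

theorem exists_mem_Ioo (hP : IsC1Partition X L t) {r : ℝ} (hr : r ∈ Ioo 0 L \ range t) :
    ∃ k : Fin n, r ∈ Ioo (t k.castSucc) (t k.succ) := by
  obtain ⟨⟨hr0, hrL⟩, hrt⟩ := hr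
  suffices ∀ k : Fin (n + 1), r < t k → ∃ j : Fin n, r ∈ Ioo (t j.castSucc) (t j.succ) from
    this _ (hP.last ▸ hrL)
  intro k
  induction k using Fin.induction with
  | zero => exact fun h => absurd (hP.zero ▸ h) hr0.not_gt
  | succ k ih =>
    intro h
    rcases lt_or_ge r (t k.castSucc) with h' | h'
    · exact ih h'
    · exact ⟨k, h'.lt_of_ne fun e => hrt ⟨_, e⟩, h⟩

theorem contDiffOn_apply (hP : IsC1Partition X L t) (k : Fin n) (i : Fin d) :
    ContDiffOn ℝ 1 (X · i) (Icc (t k.castSucc) (t k.succ)) :=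
  contDiffOn_pi.1 (hP.contDiffOn k) i

theorem hasDerivAt (hP : IsC1Partition X L t) {r : ℝ} (hr : r ∈ Ioo 0 L \ range t)
    (i : Fin d) : HasDerivAt (X · i) (deriv (X · i) r) r := by
  obtain ⟨k, hk⟩ := hP.exists_mem_Ioo hr
  exact (((hP.contDiffOn_apply k i).differentiableOn one_ne_zero).differentiableAt
    (Icc_mem_nhds hk.1 hk.2)).hasDerivAt

theorem continuousAt_deriv (hP : IsC1Partition X L t) {r : ℝ} (hr : r ∈ Ioo 0 L \ range t)
    (i : Fin d) : ContinuousAt (deriv (X · i)) r := by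
  obtain ⟨k, hk⟩ := hP.exists_mem_Ioo hr
  refine (((hP.contDiffOn_apply k i).continuousOn_derivWithin
    (uniqueDiffOn_Icc (hk.1.trans hk.2)) le_rfl).continuousAt (Icc_mem_nhds hk.1 hk.2)).congr ?_
  filter_upwards [Ioo_mem_nhds hk.1 hk.2] with x hx
  exact derivWithin_of_mem_nhds (Icc_mem_nhds hx.1 hx.2)

theorem intervalIntegrable_deriv_piece (hP : IsC1Partition X L t) (k : Fin n) (i : Fin d) :
    IntervalIntegrable (deriv (X · i)) volume (t k.castSucc) (t k.succ) := by
  rcases (hP.monotone k.castSucc_le_succ).eq_or_lt with h | h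
  · rw [h]
  have hc := ((hP.contDiffOn_apply k i).continuousOn_derivWithin (uniqueDiffOn_Icc h)
    le_rfl).intervalIntegrable_of_Icc (μ := volume) h.le
  rw [intervalIntegrable_iff_integrableOn_Ioo_of_le h.le] at hc ⊢
  exact hc.congr_fun (fun x hx => derivWithin_of_mem_nhds (Icc_mem_nhds hx.1 hx.2))
    measurableSet_Ioo

theorem intervalIntegrable_deriv (hP : IsC1Partition X L t) (i : Fin d) :
    IntervalIntegrable (deriv (X · i)) volume 0 L := by
  suffices ∀ k, IntervalIntegrable (deriv (X · i)) volume 0 (t k) by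
    simpa [hP.last] using this (Fin.last n)
  intro k
  induction k using Fin.induction with
  | zero => rw [hP.zero]
  | succ k ih => exact ih.trans (hP.intervalIntegrable_deriv_piece k i)

theorem continuousOn (hP : IsC1Partition X L t) : ContinuousOn X (Icc 0 L) := by
  suffices ∀ k, ContinuousOn X (Icc 0 (t k)) by simpa [hP.last] using this (Fin.last n)
  intro k
  induction k using Fin.induction with
  | zero => rw [hP.zero, Icc_self]; exact continuousOn_singleton _ _
  | succ k ih =>
    rw [← Icc_union_Icc_eq_Icc (hP.mem_Icc _).1 (hP.monotone k.castSucc_le_succ)]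
    exact ih.union_of_isClosed (hP.contDiffOn k).continuousOn isClosed_Icc isClosed_Icc

theorem comp_polyMap (hP : IsC1Partition X L t) (p : PolyMap d m) :
    IsC1Partition (pPath p X) L t :=
  ⟨hP.monotone, hP.zero, hP.last, fun k =>
    contDiffOn_pi.2 fun i => (contDiff_eval (p i)).comp_contDiffOn (hP.contDiffOn k)⟩

end IsC1Partition

end Analysis

section Signature

open Set MeasureTheory intervalIntegral

@[simp] theorem sigWord_nil (X : ℝ → Fin d → ℝ) (s : ℝ) : sigWord X s [] = 1 := rfl

theorem sigWord_at_zero (X : ℝ → Fin d → ℝ) (w : Word d) :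
    sigWord X 0 w = if w = [] then 1 else 0 := by
  rcases List.eq_nil_or_concat' w with rfl | ⟨u, a, rfl⟩
  · rfl
  · simp [sigWord, sigRev]

theorem sigT_at_zero (X : ℝ → Fin d → ℝ) (x : Tens d) : sigT X 0 x = x [] := by
  induction x using Finsupp.induction_linear with
  | zero => simp
  | add x y hx hy => simp [hx, hy]
  | single w c => simp [sigWord_at_zero, Finsupp.single_apply]

theorem sigT_shuffle_of_forall_word (X : ℝ → Fin d → ℝ) (L : ℝ) {x y : Tens d}
    (H : ∀ u ∈ x.support, ∀ v ∈ y.support,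
      sigT X L (shuffleWord u v) = sigWord X L u * sigWord X L v) :
    sigT X L (shuffle x y) = sigT X L x * sigT X L y := by
  simp only [shuffle_eq_sum, sigT_sum, sigT_smul]
  rw [sigT, Finsupp.sum, sigT, Finsupp.sum, Finset.sum_mul_sum]
  refine Finset.sum_congr rfl fun u hu => Finset.sum_congr rfl fun v hv => ?_
  rw [H u hu v hv]
  ring

namespace IsC1Partition

variable {X : ℝ → Fin d → ℝ} {L : ℝ} {n : ℕ} {t : Fin (n + 1) → ℝ}

theorem intervalIntegrable_mul_deriv (hP : IsC1Partition X L t) (i : Fin d) {f : ℝ → ℝ}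
    (hf : ContinuousOn f (Icc 0 L)) {u : ℝ} (hu : u ∈ Icc 0 L) :
    IntervalIntegrable (fun r => f r * deriv (X · i) r) volume 0 u := by
  have hsub : uIcc 0 u ⊆ Icc 0 L := by
    rw [uIcc_of_le hu.1]; exact Icc_subset_Icc_right hu.2
  exact ((hP.intervalIntegrable_deriv i).mono_set
    (by rwa [uIcc_of_le hP.nonneg])).continuousOn_mul (hf.mono hsub)

theorem continuousOn_primitive (hP : IsC1Partition X L t) (i : Fin d) {f : ℝ → ℝ}
    (hf : ContinuousOn f (Icc 0 L)) :
    ContinuousOn (fun s => ∫ r in (0 : ℝ)..s, f r * deriv (X · i) r) (Icc 0 L) := by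
  simpa [uIcc_of_le hP.nonneg] using continuousOn_primitive_interval'
    (hP.intervalIntegrable_mul_deriv i hf (right_mem_Icc.2 hP.nonneg)) left_mem_uIcc

theorem hasDerivAt_primitive (hP : IsC1Partition X L t) (i : Fin d) {f : ℝ → ℝ}
    (hf : ContinuousOn f (Icc 0 L)) {r : ℝ} (hr : r ∈ Ioo 0 L \ range t) :
    HasDerivAt (fun s => ∫ x in (0 : ℝ)..s, f x * deriv (X · i) x)
      (f r * deriv (X · i) r) r := by
  have hL := hP.intervalIntegrable_mul_deriv i hf (right_mem_Icc.2 hP.nonneg)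
  exact integral_hasDerivAt_right
    (hP.intervalIntegrable_mul_deriv i hf (Ioo_subset_Icc_self hr.1))
    (_root_.AEStronglyMeasurable.stronglyMeasurableAtFilter_of_mem hL.1.aestronglyMeasurable
      (Ioc_mem_nhds hr.1.1 hr.1.2))
    ((hf.continuousAt (Icc_mem_nhds hr.1.1 hr.1.2)).mul (hP.continuousAt_deriv hr i))

theorem continuousOn_sigRev (hP : IsC1Partition X L t) (l : List (Fin d)) :
    ContinuousOn (sigRev X l) (Icc 0 L) := by
  induction l with
  | nil => exact continuousOn_const
  | cons i l ih => exact hP.continuousOn_primitive i ih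

theorem hasDerivAt_sigRev_cons (hP : IsC1Partition X L t) (i : Fin d) (l : List (Fin d))
    {r : ℝ} (hr : r ∈ Ioo 0 L \ range t) :
    HasDerivAt (sigRev X (i :: l)) (sigRev X l r * deriv (X · i) r) r :=
  hP.hasDerivAt_primitive i (hP.continuousOn_sigRev l) hr

theorem continuousOn_sigT (hP : IsC1Partition X L t) (x : Tens d) :
    ContinuousOn (fun s => sigT X s x) (Icc 0 L) := by
  induction x using Finsupp.induction_linear with
  | zero => simp only [sigT_zero]; exact continuousOn_const
  | add x y hx hy => simp only [sigT_add]; exact hx.add hy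
  | single w c =>
    simp only [sigT_single]
    exact continuousOn_const.mul (hP.continuousOn_sigRev _)

theorem hasDerivAt_sigWord (hP : IsC1Partition X L t) (w : Word d) {r : ℝ}
    (hr : r ∈ Ioo 0 L \ range t) :
    HasDerivAt (fun s => sigWord X s w)
      (∑ i, sigT X r (TminusWord i w) * deriv (X · i) r) r := by
  rcases List.eq_nil_or_concat' w with rfl | ⟨u, a, rfl⟩
  · exact (hasDerivAt_const r (1 : ℝ)).congr_deriv (by simp)
  · simpa [sigWord, TminusWord_append_singleton, wordT, apply_ite (sigT X r), ite_mul]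
      using hP.hasDerivAt_sigRev_cons a u.reverse hr

theorem hasDerivAt_sigT (hP : IsC1Partition X L t) (x : Tens d) {r : ℝ}
    (hr : r ∈ Ioo 0 L \ range t) :
    HasDerivAt (fun s => sigT X s x) (∑ i, sigT X r (Tminus i x) * deriv (X · i) r) r := by
  induction x using Finsupp.induction_linear with
  | zero =>
    simp only [sigT_zero, Tminus_zero, zero_mul, Finset.sum_const_zero]
    exact hasDerivAt_const r 0
  | add x y hx hy =>
    simp only [sigT_add, Tminus_add, add_mul, Finset.sum_add_distrib]
    exact hx.add hy
  | single w c =>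
    simp only [sigT_single, Tminus_single, sigT_smul, mul_assoc, ← Finset.mul_sum]
    exact (hP.hasDerivAt_sigWord w hr).const_mul c

end IsC1Partition

end Signature

section Shuffle

open Set

namespace IsC1Partition

variable {X : ℝ → Fin d → ℝ} {L : ℝ} {n : ℕ} {t : Fin (n + 1) → ℝ}

theorem sigT_shuffleWord (hP : IsC1Partition X L t) (u v : Word d) :
    EqOn (fun s => sigT X s (shuffleWord u v)) (fun s => sigWord X s u * sigWord X s v)
      (Icc 0 L) := by
  induction h : u.length + v.length using Nat.strong_induction_on generalizing u v with
  | _ N ih =>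
  have hleft : ∀ i {s}, s ∈ Icc 0 L → sigT X s (shuffle (TminusWord i u) (wordT v)) =
      sigT X s (TminusWord i u) * sigWord X s v := by
    refine fun i s hs => (sigT_shuffle_of_forall_word X s fun u' hu' v' hv' => ?_).trans ?_
    · rw [show v' = v by simpa [wordT] using hv']
      exact ih _ (h ▸ by linarith [length_lt_of_mem_support_TminusWord hu']) u' v rfl hs
    · simp [wordT]
  have hright : ∀ i {s}, s ∈ Icc 0 L → sigT X s (shuffle (wordT u) (TminusWord i v)) =
      sigWord X s u * sigT X s (TminusWord i v) := by
    refine fun i s hs => (sigT_shuffle_of_forall_word X s fun u' hu' v' hv' => ?_).trans ?_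
    · rw [show u' = u by simpa [wordT] using hu']
      exact ih _ (h ▸ by linarith [length_lt_of_mem_support_TminusWord hv']) u v' rfl hs
    · simp [wordT]
  refine eqOn_Icc_of_hasDerivAt_off_countable (finite_range t).countable
    (hP.continuousOn_sigT _) ((hP.continuousOn_sigRev _).mul (hP.continuousOn_sigRev _))
    ?_ (fun r hr => hP.hasDerivAt_sigT _ hr) fun r hr => ?_
  · simp only [sigT_at_zero, shuffleWord_apply_nil, sigWord_at_zero]
    split_ifs <;> simp_all
  · have hr' : r ∈ Icc 0 L := Ioo_subset_Icc_self hr.1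
    refine ((hP.hasDerivAt_sigWord u hr).mul (hP.hasDerivAt_sigWord v hr)).congr_deriv ?_
    simp only [Tminus_shuffleWord, sigT_add, hleft _ hr', hright _ hr', Finset.sum_mul,
      Finset.mul_sum, ← Finset.sum_add_distrib]
    exact Finset.sum_congr rfl fun i _ => by ring

theorem sigT_shuffle (hP : IsC1Partition X L t) (x y : Tens d) {s : ℝ} (hs : s ∈ Icc 0 L) :
    sigT X s (shuffle x y) = sigT X s x * sigT X s y :=
  sigT_shuffle_of_forall_word X s fun u _ v _ => hP.sigT_shuffleWord u v hs

end IsC1Partition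

end Shuffle

section Transform

open Set MvPolynomial

theorem Tminus_letterT (i j : Fin d) : Tminus j (letterT i) = if i = j then wordT [] else 0 := by
  simp [letterT, TminusWord, wordT]

theorem Tminus_MpRev_cons (p : PolyMap d m) (i : Fin m) (l : List (Fin m)) (j : Fin d) :
    Tminus j (MpRev p (i :: l)) = shuffle (MpRev p l) (kP p i j) := by
  simp [MpRev, Tminus_appendLetter]

theorem MpRev_cons_apply_nil (p : PolyMap d m) (i : Fin m) (l : List (Fin m)) :
    MpRev p (i :: l) [] = 0 := by
  simp [MpRev, Finsupp.finsetSum_apply, appendLetter_apply_nil]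

namespace IsC1Partition

variable {X : ℝ → Fin d → ℝ} {L : ℝ} {n : ℕ} {t : Fin (n + 1) → ℝ}

theorem sigT_letterT (hP : IsC1Partition X L t) (i : Fin d) {s : ℝ} (hs : s ∈ Icc 0 L) :
    sigT X s (letterT i) = X s i - X 0 i := by
  refine eqOn_Icc_of_hasDerivAt_off_countable (finite_range t).countable (hP.continuousOn_sigT _)
    (((continuous_apply i).comp_continuousOn hP.continuousOn).sub continuousOn_const) ?_
    (fun r hr => hP.hasDerivAt_sigT _ hr) (fun r hr => ?_) hs
  · simp [letterT, sigWord_at_zero]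
  · refine ((hP.hasDerivAt hr i).sub_const (X 0 i)).congr_deriv ?_
    simp [Tminus_letterT, wordT, apply_ite (sigT X r), ite_mul]

theorem sigT_shufflePow (hP : IsC1Partition X L t) (x : Tens d) (k : ℕ) {s : ℝ}
    (hs : s ∈ Icc 0 L) : sigT X s (shufflePow x k) = sigT X s x ^ k := by
  induction k with
  | zero => simp [shufflePow]
  | succ k ih => rw [shufflePow, hP.sigT_shuffle _ _ hs, ih, pow_succ]

theorem sigT_shuffleList (hP : IsC1Partition X L t) (l : List (Tens d)) {s : ℝ}
    (hs : s ∈ Icc 0 L) : sigT X s (shuffleList l) = (l.map (sigT X s)).prod := by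
  induction l with
  | nil => simp [shuffleList]
  | cons x l ih => rw [shuffleList, hP.sigT_shuffle _ _ hs, ih, List.map_cons, List.prod_cons]

theorem sigT_phi (hP : IsC1Partition X L t) (q : MvPolynomial (Fin d) ℝ) {s : ℝ}
    (hs : s ∈ Icc 0 L) : sigT X s (phi q) = eval (X s - X 0) q := by
  simp only [phi, sigT_sum, sigT_smul, phiMon, hP.sigT_shuffleList _ hs, List.map_map, eval_eq']
  refine Finset.sum_congr rfl fun τ _ => ?_
  rw [← List.ofFn_eq_map, List.prod_ofFn]
  simp [hP.sigT_shufflePow _ _ hs, hP.sigT_letterT _ hs]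

theorem sigT_kP_ptilde (hP : IsC1Partition X L t) (p : PolyMap d m) (i : Fin m) (j : Fin d)
    {s : ℝ} (hs : s ∈ Icc 0 L) :
    sigT X s (kP (ptilde p (X 0)) i j) = eval (X s) (pderiv j (p i)) := by
  rw [kP, pderiv_ptilde, hP.sigT_phi _ hs, eval_aeval_add_C, sub_add_cancel]

theorem sigRev_pPath (hP : IsC1Partition X L t) (p : PolyMap d m) (l : List (Fin m)) :
    EqOn (sigRev (pPath p X) l) (fun s => sigT X s (MpRev (ptilde p (X 0)) l)) (Icc 0 L) := by
  induction l with
  | nil => intro s _; simp [sigRev, MpRev]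
  | cons i l ih =>
    refine eqOn_Icc_of_hasDerivAt_off_countable (finite_range t).countable
      ((hP.comp_polyMap p).continuousOn_sigRev _) (hP.continuousOn_sigT _) ?_
      (fun r hr => (hP.comp_polyMap p).hasDerivAt_sigRev_cons i l hr) fun r hr => ?_
    · simp [sigRev, sigT_at_zero, MpRev_cons_apply_nil]
    · have hr' : r ∈ Icc 0 L := Ioo_subset_Icc_self hr.1
      refine (hP.hasDerivAt_sigT _ hr).congr_deriv ?_
      rw [ih hr']
      dsimp only [pPath]
      rw [(hasDerivAt_eval_comp (hP.hasDerivAt hr) (p i)).deriv, Finset.mul_sum]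
      refine Finset.sum_congr rfl fun j _ => ?_
      rw [Tminus_MpRev_cons, hP.sigT_shuffle _ _ hr', hP.sigT_kP_ptilde p i j hr']
      ring

end IsC1Partition

end Transform

/-- For any piecewise continuously differentiable path `X : [0,L] → ℝ^d`
and any polynomial map `p`, with `p̃(y) = p(y + X(0)) − p(X(0))`, one has
`⟨σ(p(X)), w⟩ = ⟨σ(X), M_{p̃}(w)⟩` for all `w ∈ T(ℝ^m)`. -/
theorem signature_polynomial_transform_general (d m : ℕ) (L : ℝ)
    (X : ℝ → Fin d → ℝ) (hX : PiecewiseC1 X L) (p : PolyMap d m) :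
    ∀ x : Tens m, sigT (pPath p X) L x = sigT X L (Mp (ptilde p (X 0)) x) := by
  obtain ⟨n, t, hmono, h0, hlast, hC1⟩ := hX
  have hP : IsC1Partition X L t := ⟨hmono, h0, hlast, hC1⟩
  intro x
  rw [Mp, Finsupp.sum, sigT_sum, sigT, Finsupp.sum]
  refine Finset.sum_congr rfl fun w _ => ?_
  rw [sigT_smul, sigWord, MpWord, hP.sigRev_pPath p w.reverse ⟨hP.nonneg, le_rfl⟩]

end SigPaper
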